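/- If B is a point-basis of a digraph D (a minimal point-reaching set), then B contains exactly one vertex from each initial strong component of D and no vertex from any non-initial strong component. -/

import Mathlib

/-- Reachability by a directed walk (allowing the trivial walk). -/
def Reach {V : Type*} (A : V → V → Prop) : V → V → Prop := Relation.ReflTransGen A
/-- The strong component of a vertex: all vertices mutually reachable with it. -/
def SCC {V : Type*} (A : V → V → Prop) (v : V) : Set V :=
  {w | Reach A v w ∧ Reach A w v}

/-- A set is a strong component iff it is the strong component of some vertex. -/
def IsSCC {V : Type*} (A : V → V → Prop) (C : Set V) : Prop := ∃ v, C = SCC A v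

/-- A strong component is initial if no arc enters it from outside. -/
def InitialSCC {V : Type*} (A : V → V → Prop) (C : Set V) : Prop :=
  IsSCC A C ∧ ∀ x y, A x y → y ∈ C → x ∈ C
/-- A set S is point-reaching if every vertex is reachable from some vertex of S. -/
def PointReaching {V : Type*} (A : V → V → Prop) (S : Set V) : Prop :=
  ∀ v : V, ∃ s ∈ S, Reach A s v
/-- A point-basis is a minimal point-reaching set. -/
def IsPointBasis {V : Type*} (A : V → V → Prop) (B : Set V) : Prop :=
  PointReaching A B ∧ ∀ B' ⊂ B, ¬ PointReaching A B'

/-!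
A vertex of a point-basis `B` can never be reached from another vertex of `B`, since otherwise
it could be dropped. Every vertex reaching a vertex of an initial component lies in it, so a
vertex of `B` reaching the component lies in it and no other vertex of `B` does. Conversely, if
an arc `x → y` enters the component of `b ∈ B`, the vertex of `B` reaching `x` also reaches `b`,
hence is `b`, so `x` is in the component of `b` after all.
-/

section PointBasis

variable {V : Type*} {A : V → V → Prop}

lemma mem_SCC_self (v : V) : v ∈ SCC A v :=
  ⟨Relation.ReflTransGen.refl, Relation.ReflTransGen.refl⟩

lemma InitialSCC.mem_of_reach {C : Set V} (hC : InitialSCC A C) {x y : V} (h : Reach A x y)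
    (hy : y ∈ C) : x ∈ C := by
  induction h with
  | refl => exact hy
  | tail _ hab ih => exact ih (hC.2 _ _ hab hy)

lemma PointReaching.diff_singleton {B : Set V} (hB : PointReaching A B) {b b' : V}
    (hb' : b' ∈ B) (hne : b' ≠ b) (hr : Reach A b' b) : PointReaching A (B \ {b}) := by
  intro v
  obtain ⟨s, hs, hsv⟩ := hB v
  by_cases h : s = b
  · exact ⟨b', ⟨hb', hne⟩, hr.trans (h ▸ hsv)⟩
  · exact ⟨s, ⟨hs, h⟩, hsv⟩

lemma IsPointBasis.eq_of_reach {B : Set V} (hB : IsPointBasis A B) {b b' : V} (hb : b ∈ B)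
    (hb' : b' ∈ B) (hr : Reach A b' b) : b' = b := by
  by_contra hne
  exact hB.2 (B \ {b}) (Set.sdiff_singleton_ssubset.mpr hb) (hB.1.diff_singleton hb' hne hr)

lemma IsPointBasis.existsUnique_mem_inter {B C : Set V} (hB : IsPointBasis A B)
    (hC : InitialSCC A C) : ∃! b : V, b ∈ B ∩ C := by
  obtain ⟨v, rfl⟩ := hC.1
  obtain ⟨b, hbB, hbv⟩ := hB.1 v
  have hbC : b ∈ SCC A v := hC.mem_of_reach hbv (mem_SCC_self v)
  exact ⟨b, ⟨hbB, hbC⟩, fun b' ⟨hb'B, hb'C⟩ => hB.eq_of_reach hbB hb'B (hb'C.2.trans hbC.1)⟩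

lemma IsPointBasis.initialSCC_SCC {B : Set V} (hB : IsPointBasis A B) {b : V} (hb : b ∈ B) :
    InitialSCC A (SCC A b) := by
  refine ⟨⟨b, rfl⟩, fun x y hxy hy => ?_⟩
  have hxb : Reach A x b := (Relation.ReflTransGen.single hxy).trans hy.2
  obtain ⟨b', hb'B, hb'x⟩ := hB.1 x
  obtain rfl : b' = b := hB.eq_of_reach hb hb'B (hb'x.trans hxb)
  exact ⟨hb'x, hxb⟩

end PointBasis

theorem pointBasis_one_vertex_per_initial_component {V : Type*}
    (A : V → V → Prop) (B : Set V) (hB : IsPointBasis A B) :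
    (∀ C : Set V, InitialSCC A C → ∃! b : V, b ∈ B ∩ C) ∧
    (∀ b ∈ B, InitialSCC A (SCC A b)) :=
  ⟨fun _ hC => hB.existsUnique_mem_inter hC, fun _ hb => hB.initialSCC_SCC hb⟩
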